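/- arXiv:1508.07417 — 5 statements merged into one kernel-verified Lean document; each statement's English description precedes it below -/
import Mathlib

section
/- Let H and K be separable complex Hilbert spaces, and let A (on H) and B (on K) be bounded positive injective self-adjoint operators that are diagonalizable, i.e. H (resp. K) has an orthonormal basis of eigenvectors of A (resp. B). Fix μ > 0. Then every vector ξ in the Hilbert space tensor product H ⊗ K satisfying (A ⊗ B)ξ = μ ξ lies in the closed linear span of the set of elementary tensors v ⊗ w where v is an eigenvector of A with eigenvalue s, w is an eigenvector of B with eigenvalue t, and s·t = μ. -/
/-!
An elementary tensor `v ⊗ w` of eigenvectors with eigenvalues `s`, `t` is an eigenvector of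
`A ⊗ B` with eigenvalue `s t`, and `A ⊗ B` is symmetric against elementary tensors; so when
`s t ≠ μ` it is orthogonal to the `μ`-eigenspace. Let `U` and `V` be the spans of the
eigentensors with `s t = μ` and `s t ≠ μ`. Then `U ⟂ V`, and `U ⊔ V` is dense because the
eigenvectors of `A` and of `B` are total and `⊗` is separately continuous. Hence
`closure U = Vᗮ`, which contains the whole `μ`-eigenspace.
-/

open scoped InnerProductSpace

namespace Submodule

section Density

variable {R E : Type*} [CommSemiring R] [AddCommMonoid E] [Module R E] [TopologicalSpace E]
  [ContinuousAdd E] [ContinuousConstSMul R E]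

theorem eq_top_of_isClosed_of_dense_span {p : Submodule R E} {s : Set E}
    (hp : IsClosed (p : Set E)) (hs : Dense (span R s : Set E)) (hsp : s ⊆ p) : p = ⊤ :=
  top_unique <| dense_iff_topologicalClosure_eq_top.mp hs ▸
    (span R s).topologicalClosure_minimal (span_le.mpr hsp) hp

end Density

variable {𝕜 E : Type*} [RCLike 𝕜] [NormedAddCommGroup E] [InnerProductSpace 𝕜 E] [CompleteSpace E]

theorem topologicalClosure_eq_orthogonal_of_isOrtho {U V : Submodule 𝕜 E} (hUV : U ⟂ V)
    (hdense : (U ⊔ V).topologicalClosure = ⊤) : U.topologicalClosure = Vᗮ := by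
  have hle : U.topologicalClosure ≤ Vᗮ :=
    U.topologicalClosure_minimal hUV.le V.isClosed_orthogonal
  have : CompleteSpace U.topologicalClosure := U.isClosed_topologicalClosure.completeSpace_coe
  have hbot : U.topologicalClosureᗮ ⊓ Vᗮ = ⊥ := by
    rwa [orthogonal_closure, inf_orthogonal, ← topologicalClosure_eq_top_iff]
  calc U.topologicalClosure = U.topologicalClosure ⊔ U.topologicalClosureᗮ ⊓ Vᗮ := by
        rw [hbot, sup_bot_eq]
    _ = Vᗮ := sup_orthogonal_inf_of_hasOrthogonalProjection hle

end Submodule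

section Bilinear

variable {R E F G : Type*} [CommSemiring R]
  [AddCommMonoid E] [Module R E] [TopologicalSpace E] [ContinuousAdd E] [ContinuousConstSMul R E]
  [AddCommMonoid F] [Module R F] [TopologicalSpace F] [ContinuousAdd F] [ContinuousConstSMul R F]
  [AddCommMonoid G] [Module R G] [TopologicalSpace G] [ContinuousAdd G] [ContinuousConstSMul R G]

open Submodule in
theorem LinearMap.dense_span_image2 (f : E →ₗ[R] F →ₗ[R] G)
    (hf₁ : ∀ x, Continuous (f x)) (hf₂ : ∀ y, Continuous (f.flip y)) {s : Set E} {t : Set F}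
    (hs : Dense (span R s : Set E)) (ht : Dense (span R t : Set F))
    (hf : Dense (span R {z | ∃ x y, z = f x y} : Set G)) :
    Dense (span R (Set.image2 (fun x y => f x y) s t) : Set G) := by
  set W := (span R (Set.image2 (fun x y => f x y) s t)).topologicalClosure
  have hW : IsClosed (W : Set G) := isClosed_topologicalClosure _
  have hs_mem : ∀ x ∈ s, ∀ y, f x y ∈ W := fun x hx =>
    eq_top_iff'.mp <| eq_top_of_isClosed_of_dense_span (p := W.comap (f x))
      (hW.preimage (hf₁ x)) ht fun y hy => le_topologicalClosure _ (subset_span ⟨x, hx, y, hy, rfl⟩)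
  have h_mem : ∀ x y, f x y ∈ W := fun x y =>
    eq_top_iff'.mp (eq_top_of_isClosed_of_dense_span (p := W.comap (f.flip y))
      (hW.preimage (hf₂ y)) hs fun x hx => hs_mem x hx y) x
  rw [dense_iff_topologicalClosure_eq_top]
  exact eq_top_of_isClosed_of_dense_span hW hf (by rintro _ ⟨x, y, rfl⟩; exact h_mem x y)

end Bilinear

section Eigen

variable {𝕜 E : Type*} [RCLike 𝕜] [NormedAddCommGroup E] [InnerProductSpace 𝕜 E]

theorem inner_eq_zero_of_eigenvector {T : E →L[𝕜] E} {x y : E} {a b : ℝ}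
    (hT : ⟪T x, y⟫_𝕜 = ⟪x, T y⟫_𝕜) (hx : T x = (a : 𝕜) • x) (hy : T y = (b : 𝕜) • y)
    (hab : a ≠ b) : ⟪x, y⟫_𝕜 = 0 := by
  rw [hx, hy, inner_smul_left, inner_smul_right, RCLike.conj_ofReal] at hT
  have : ((a : 𝕜) - b) * ⟪x, y⟫_𝕜 = 0 := by rw [sub_mul, hT, sub_self]
  exact (mul_eq_zero.mp this).resolve_left (sub_ne_zero.mpr (by exact_mod_cast hab))

end Eigen

section Tensor

variable {𝕜 H K E : Type*} [RCLike 𝕜]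
  [NormedAddCommGroup H] [InnerProductSpace 𝕜 H] [NormedAddCommGroup K] [InnerProductSpace 𝕜 K]
  [NormedAddCommGroup E] [InnerProductSpace 𝕜 E] {tensor : H →ₗ[𝕜] K →ₗ[𝕜] E}
  {A : H →L[𝕜] H} {B : K →L[𝕜] K} {AB : E →L[𝕜] E}
  (hAB : ∀ (v : H) (w : K), AB (tensor v w) = tensor (A v) (B w))

include hAB in
theorem map_tensor_eq_smul {v : H} {w : K} {s t : ℝ} (hv : A v = (s : 𝕜) • v)
    (hw : B w = (t : 𝕜) • w) : AB (tensor v w) = ((s * t : ℝ) : 𝕜) • tensor v w := by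
  rw [hAB, hv, hw, map_smul, map_smul, LinearMap.smul_apply, smul_smul, RCLike.ofReal_mul,
    mul_comm]

variable (htensor_inner : ∀ (v v' : H) (w w' : K),
    ⟪tensor v w, tensor v' w'⟫_𝕜 = ⟪v, v'⟫_𝕜 * ⟪w, w'⟫_𝕜)
include htensor_inner

theorem norm_tensor_apply (v : H) (w : K) : ‖tensor v w‖ = ‖v‖ * ‖w‖ := by
  have h := htensor_inner v v w w
  rw [inner_self_eq_norm_sq_to_K, inner_self_eq_norm_sq_to_K, inner_self_eq_norm_sq_to_K,
    ← mul_pow] at h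
  exact (pow_left_inj₀ (norm_nonneg _) (by positivity) two_ne_zero).mp (by exact_mod_cast h)

theorem continuous_tensor_apply (v : H) : Continuous (tensor v) :=
  AddMonoidHomClass.continuous_of_bound (tensor v) ‖v‖ fun w =>
    (norm_tensor_apply htensor_inner v w).le

theorem continuous_tensor_flip_apply (w : K) : Continuous (tensor.flip w) :=
  AddMonoidHomClass.continuous_of_bound (tensor.flip w) ‖w‖ fun v => by
    rw [LinearMap.flip_apply, norm_tensor_apply htensor_inner, mul_comm]

variable (htensor_dense : Dense (Submodule.span 𝕜 {x : E | ∃ v w, x = tensor v w} : Set E))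
  (hA : (A : H →ₗ[𝕜] H).IsSymmetric) (hB : (B : K →ₗ[𝕜] K).IsSymmetric)
include hAB htensor_dense hA hB

theorem inner_map_tensor_left (v : H) (w : K) (y : E) :
    ⟪AB (tensor v w), y⟫_𝕜 = ⟪tensor v w, AB y⟫_𝕜 := by
  have : innerSL 𝕜 (AB (tensor v w)) = (innerSL 𝕜 (tensor v w)).comp AB := by
    refine ContinuousLinearMap.ext_on htensor_dense ?_
    rintro _ ⟨v', w', rfl⟩
    simp only [innerSL_apply_apply, ContinuousLinearMap.comp_apply, hAB, htensor_inner]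
    exact congr_arg₂ (· * ·) (hA v v') (hB w w')
  exact DFunLike.congr_fun this y

theorem eigenspace_isOrtho_span_eigentensors (μ : ℝ) :
    Module.End.eigenspace (AB : E →ₗ[𝕜] E) μ ⟂ Submodule.span 𝕜
      {x : E | ∃ (v : H) (w : K) (s t : ℝ), s * t ≠ μ ∧
        A v = (s : 𝕜) • v ∧ B w = (t : 𝕜) • w ∧ x = tensor v w} := by
  rw [Submodule.isOrtho_comm, Submodule.isOrtho_iff_le, Submodule.span_le]
  rintro _ ⟨v, w, s, t, hst, hv, hw, rfl⟩
  refine (Submodule.mem_orthogonal' _ _).2 fun y hy => ?_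
  exact inner_eq_zero_of_eigenvector
    (inner_map_tensor_left hAB htensor_inner htensor_dense hA hB v w y)
    (map_tensor_eq_smul hAB hv hw) (Module.End.mem_eigenspace_iff.1 hy) hst

end Tensor

theorem stmt0_general
    {H K E : Type*}
    [NormedAddCommGroup H] [InnerProductSpace ℂ H] [CompleteSpace H]
    [NormedAddCommGroup K] [InnerProductSpace ℂ K] [CompleteSpace K]
    [NormedAddCommGroup E] [InnerProductSpace ℂ E] [CompleteSpace E]
    (tensor : H →ₗ[ℂ] K →ₗ[ℂ] E)
    (htensor_inner : ∀ (v v' : H) (w w' : K),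
      ⟪tensor v w, tensor v' w'⟫_ℂ = ⟪v, v'⟫_ℂ * ⟪w, w'⟫_ℂ)
    (htensor_dense :
      closure ((Submodule.span ℂ {x : E | ∃ v w, x = tensor v w} : Submodule ℂ E) : Set E) = Set.univ)
    (A : H →L[ℂ] H) (B : K →L[ℂ] K) (AB : E →L[ℂ] E)
    (hA : IsSelfAdjoint A) (hB : IsSelfAdjoint B)
    (hAdiag :
      closure ((Submodule.span ℂ {v : H | ∃ s : ℝ, v ≠ 0 ∧ A v = (s : ℂ) • v} : Submodule ℂ H) : Set H)
        = Set.univ)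
    (hBdiag :
      closure ((Submodule.span ℂ {w : K | ∃ t : ℝ, w ≠ 0 ∧ B w = (t : ℂ) • w} : Submodule ℂ K) : Set K)
        = Set.univ)
    (hAB : ∀ (v : H) (w : K), AB (tensor v w) = tensor (A v) (B w))
    (μ : ℝ)
    (ξ : E) (hξ : AB ξ = (μ : ℂ) • ξ) :
    ξ ∈ closure ((Submodule.span ℂ
      {x : E | ∃ (v : H) (w : K) (s t : ℝ), s * t = μ ∧ v ≠ 0 ∧ w ≠ 0 ∧
        A v = (s : ℂ) • v ∧ B w = (t : ℂ) • w ∧ x = tensor v w} : Submodule ℂ E) : Set E) := by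
  set M : Set E := {x : E | ∃ (v : H) (w : K) (s t : ℝ), s * t = μ ∧ v ≠ 0 ∧ w ≠ 0 ∧
    A v = (s : ℂ) • v ∧ B w = (t : ℂ) • w ∧ x = tensor v w}
  set N : Set E := {x : E | ∃ (v : H) (w : K) (s t : ℝ), s * t ≠ μ ∧
    A v = (s : ℂ) • v ∧ B w = (t : ℂ) • w ∧ x = tensor v w}
  have htensor_dense' := dense_iff_closure_eq.mpr htensor_dense
  have hN := eigenspace_isOrtho_span_eigentensors hAB htensor_inner htensor_dense'
    hA.isSymmetric hB.isSymmetric μ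
  have hM : Submodule.span ℂ M ≤ Module.End.eigenspace (AB : E →ₗ[ℂ] E) μ := by
    rw [Submodule.span_le]
    rintro _ ⟨v, w, s, t, hst, -, -, hv, hw, rfl⟩
    rw [← hst]
    exact Module.End.mem_eigenspace_iff.2 (map_tensor_eq_smul hAB hv hw)
  have hdense : (Submodule.span ℂ M ⊔ Submodule.span ℂ N).topologicalClosure = ⊤ := by
    rw [← Submodule.span_union, ← Submodule.dense_iff_topologicalClosure_eq_top]
    refine (tensor.dense_span_image2 (continuous_tensor_apply htensor_inner)
      (continuous_tensor_flip_apply htensor_inner) (dense_iff_closure_eq.mpr hAdiag)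
      (dense_iff_closure_eq.mpr hBdiag) htensor_dense').mono (Submodule.span_mono ?_)
    rintro _ ⟨v, ⟨s, hv0, hv⟩, w, ⟨t, hw0, hw⟩, rfl⟩
    by_cases hst : s * t = μ
    exacts [Or.inl ⟨v, w, s, t, hst, hv0, hw0, hv, hw, rfl⟩, Or.inr ⟨v, w, s, t, hst, hv, hw, rfl⟩]
  rw [← Submodule.topologicalClosure_coe,
    Submodule.topologicalClosure_eq_orthogonal_of_isOrtho (hN.mono_left hM) hdense]
  exact hN.le (Module.End.mem_eigenspace_iff.2 hξ)

/-- If `A` and `B` are bounded positive injective self-adjoint diagonalizable operators on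
separable complex Hilbert spaces `H`, `K`, then every `μ`-eigenvector (`μ > 0`) of `A ⊗ B`
on the Hilbert tensor product `E` lies in the closed span of elementary tensors of
eigenvectors of `A` and `B` whose eigenvalues multiply to `μ`. The Hilbert tensor product is
axiomatized by a bilinear map `tensor` with the characteristic inner-product identity,
whose elementary tensors are total, and on which `AB` acts diagonally. -/
theorem stmt0
    {H K E : Type*}
    [NormedAddCommGroup H] [InnerProductSpace ℂ H] [CompleteSpace H]
    [TopologicalSpace.SeparableSpace H]
    [NormedAddCommGroup K] [InnerProductSpace ℂ K] [CompleteSpace K]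
    [TopologicalSpace.SeparableSpace K]
    [NormedAddCommGroup E] [InnerProductSpace ℂ E] [CompleteSpace E]
    (tensor : H →ₗ[ℂ] K →ₗ[ℂ] E)
    (htensor_inner : ∀ (v v' : H) (w w' : K),
      ⟪tensor v w, tensor v' w'⟫_ℂ = ⟪v, v'⟫_ℂ * ⟪w, w'⟫_ℂ)
    (htensor_dense :
      closure ((Submodule.span ℂ {x : E | ∃ v w, x = tensor v w} : Submodule ℂ E) : Set E) = Set.univ)
    (A : H →L[ℂ] H) (B : K →L[ℂ] K) (AB : E →L[ℂ] E)
    (hA : IsSelfAdjoint A) (hB : IsSelfAdjoint B)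
    (hApos : ∀ v : H, 0 ≤ (⟪A v, v⟫_ℂ).re) (hBpos : ∀ w : K, 0 ≤ (⟪B w, w⟫_ℂ).re)
    (hAinj : Function.Injective A) (hBinj : Function.Injective B)
    (hAdiag :
      closure ((Submodule.span ℂ {v : H | ∃ s : ℝ, v ≠ 0 ∧ A v = (s : ℂ) • v} : Submodule ℂ H) : Set H)
        = Set.univ)
    (hBdiag :
      closure ((Submodule.span ℂ {w : K | ∃ t : ℝ, w ≠ 0 ∧ B w = (t : ℂ) • w} : Submodule ℂ K) : Set K)
        = Set.univ)
    (hAB : ∀ (v : H) (w : K), AB (tensor v w) = tensor (A v) (B w))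
    (μ : ℝ) (hμ : 0 < μ)
    (ξ : E) (hξ : AB ξ = (μ : ℂ) • ξ) :
    ξ ∈ closure ((Submodule.span ℂ
      {x : E | ∃ (v : H) (w : K) (s t : ℝ), s * t = μ ∧ v ≠ 0 ∧ w ≠ 0 ∧
        A v = (s : ℂ) • v ∧ B w = (t : ℂ) • w ∧ x = tensor v w} : Submodule ℂ E) : Set E) :=
  stmt0_general tensor htensor_inner htensor_dense A B AB hA hB hAdiag hBdiag hAB μ ξ hξ
end

section
/- Let G be a group acting on a set I such that every orbit of the action is infinite. Then for every finite subset F ⊆ I there exists g ∈ G with (g · F) ∩ F = ∅. -/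
/-!
If every `g` moved some point of `F` back into `F`, then `G` would be covered by the finitely
many sets `{g | g • x = y}` with `x, y ∈ F`. Each nonempty one is a left coset of the stabilizer
of `x`, so by B. H. Neumann's lemma one of these stabilizers has finite index, and the orbit of
that point, being in bijection with the cosets of its stabilizer, is finite.
-/

open scoped Pointwise

namespace MulAction

variable {G X : Type*} [Group G] [MulAction G X]

theorem finite_orbit_of_finiteIndex_stabilizer (x : X) [(stabilizer G x).FiniteIndex] :
    (orbit G x).Finite :=
  Set.finite_of_ncard_ne_zero <| index_stabilizer G x ▸ Subgroup.FiniteIndex.index_ne_zero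

theorem mem_leftCoset_stabilizer_of_smul_eq {g₀ g : G} {x : X} (h : g • x = g₀ • x) :
    g ∈ g₀ • (stabilizer G x : Set G) := by
  rw [mem_leftCoset_iff, SetLike.mem_coe, mem_stabilizer_iff, mul_smul, inv_smul_eq_iff, h]

theorem exists_finiteIndex_stabilizer_of_forall_exists_smul_mem {F : Finset X}
    (hF : ∀ g : G, ∃ x ∈ F, g • x ∈ F) : ∃ x ∈ F, (stabilizer G x).FiniteIndex := by
  classical
  let pairs := (F ×ˢ F).filter fun p => ∃ g : G, g • p.1 = p.2
  choose! rep hrep using fun p (hp : p ∈ pairs) => (Finset.mem_filter.mp hp).2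
  have hcover : ⋃ p ∈ pairs, rep p • (stabilizer G p.1 : Set G) = Set.univ := by
    refine Set.eq_univ_of_forall fun g => ?_
    obtain ⟨x, hx, hgx⟩ := hF g
    have hp : (x, g • x) ∈ pairs := Finset.mem_filter.mpr ⟨Finset.mk_mem_product hx hgx, g, rfl⟩
    exact Set.mem_biUnion hp <| mem_leftCoset_stabilizer_of_smul_eq (hrep _ hp).symm
  obtain ⟨p, hp, hfin⟩ := Subgroup.exists_finiteIndex_of_leftCoset_cover hcover
  exact ⟨p.1, (Finset.mem_product.mp (Finset.mem_filter.mp hp).1).1, hfin⟩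

end MulAction

/-- If every orbit of an action of a group `G` on a set `I` is infinite, then every finite
subset `F ⊆ I` can be moved off itself: there is `g ∈ G` with `(g • F) ∩ F = ∅`. -/
theorem stmt2 {G I : Type*} [Group G] [MulAction G I] [DecidableEq I]
    (horb : ∀ i : I, (MulAction.orbit G i).Infinite) (F : Finset I) :
    ∃ g : G, F.image (fun x => g • x) ∩ F = ∅ := by
  by_contra! hmeets
  have hF : ∀ g : G, ∃ x ∈ F, g • x ∈ F := fun g => by
    obtain ⟨y, hy⟩ := hmeets g
    rw [Finset.mem_inter, Finset.mem_image] at hy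
    obtain ⟨⟨x, hx, rfl⟩, hxF⟩ := hy
    exact ⟨x, hx, hxF⟩
  obtain ⟨x, -, hx⟩ := MulAction.exists_finiteIndex_stabilizer_of_forall_exists_smul_mem hF
  exact horb x (MulAction.finite_orbit_of_finiteIndex_stabilizer x)
end

section
/- Let π be a unitary representation of a countable group Γ on a Hilbert space H. The following are equivalent: (1) there exist a constant κ > 0 and a finite subset F ⊆ Γ such that ‖ξ‖ ≤ κ · Σ_{g ∈ F} ‖π(g)ξ − ξ‖ for all ξ ∈ H; (2) π has no almost invariant vectors, i.e. there is no sequence of unit vectors ξ_n ∈ H with ‖π(g)ξ_n − ξ_n‖ → 0 for every g ∈ Γ. -/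
open Filter

/-- A unitary representation `π` of a countable group `Γ` satisfies a spectral gap
inequality `‖ξ‖ ≤ κ Σ_{g ∈ F} ‖π(g)ξ - ξ‖` if and only if it has no almost invariant
unit vectors. -/
theorem stmt4 {Γ H : Type*} [Group Γ] [Countable Γ]
    [NormedAddCommGroup H] [InnerProductSpace ℂ H] [CompleteSpace H]
    (π : Γ →* (H ≃ₗᵢ[ℂ] H)) :
    (∃ (κ : ℝ), 0 < κ ∧ ∃ F : Finset Γ,
        ∀ ξ : H, ‖ξ‖ ≤ κ * ∑ g ∈ F, ‖π g ξ - ξ‖) ↔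
    ¬ ∃ ξ : ℕ → H, (∀ n, ‖ξ n‖ = 1) ∧
        ∀ g : Γ, Tendsto (fun n => ‖π g (ξ n) - ξ n‖) atTop (nhds 0) := by
  constructor
  · rintro ⟨κ, hκ, F, hF⟩ ⟨ξ, hξ1, hξ2⟩
    have hsum : Tendsto (fun n => κ * ∑ g ∈ F, ‖π g (ξ n) - ξ n‖) atTop (nhds (κ * 0)) := by
      apply Tendsto.const_mul
      have := tendsto_finset_sum F (fun g _ => hξ2 g)
      simpa using this
    have h1 : Tendsto (fun _ : ℕ => (1 : ℝ)) atTop (nhds 1) := tendsto_const_nhds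
    have hle : (1 : ℝ) ≤ κ * 0 := by
      apply le_of_tendsto_of_tendsto' h1 hsum
      intro n
      rw [← hξ1 n]
      exact hF (ξ n)
    linarith
  · intro h
    by_contra hno
    classical
    push_neg at hno
    obtain ⟨f, hf⟩ := exists_surjective_nat Γ
    -- for each n, find a bad vector
    have key : ∀ n : ℕ, ∃ ξ : H, (n + 1 : ℝ) * ∑ g ∈ (Finset.range (n+1)).image f,
        ‖π g ξ - ξ‖ < ‖ξ‖ := by
      intro n
      have := hno (n + 1) (by positivity) ((Finset.range (n+1)).image f)
      obtain ⟨ξ, hξ⟩ := this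
      exact ⟨ξ, hξ⟩
    choose ξ hξ using key
    have hpos : ∀ n, 0 < ‖ξ n‖ := by
      intro n
      refine lt_of_le_of_lt ?_ (hξ n)
      positivity
    set η : ℕ → H := fun n => (‖ξ n‖⁻¹ : ℂ) • ξ n with hη
    have hη1 : ∀ n, ‖η n‖ = 1 := by
      intro n
      simp only [hη, norm_smul]
      rw [norm_inv, Complex.norm_real, Real.norm_eq_abs, abs_of_pos (hpos n)]
      exact inv_mul_cancel₀ (hpos n).ne'
    have hscale : ∀ g n, ‖π g (η n) - η n‖ = ‖ξ n‖⁻¹ * ‖π g (ξ n) - ξ n‖ := by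
      intro g n
      simp only [hη]
      rw [map_smul, ← smul_sub, norm_smul, norm_inv, Complex.norm_real,
        Real.norm_eq_abs, abs_of_pos (hpos n)]
    have hηsum : ∀ n, ∑ g ∈ (Finset.range (n+1)).image f, ‖π g (η n) - η n‖
        < ((n : ℝ) + 1)⁻¹ := by
      intro n
      have h1 := hξ n
      have h2 : ∑ g ∈ (Finset.range (n+1)).image f, ‖π g (η n) - η n‖
          = ‖ξ n‖⁻¹ * ∑ g ∈ (Finset.range (n+1)).image f, ‖π g (ξ n) - ξ n‖ := by
        rw [Finset.mul_sum]
        exact Finset.sum_congr rfl fun g _ => hscale g n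
      rw [h2, inv_mul_lt_iff₀ (hpos n)]
      rw [mul_comm] at h1
      rw [← lt_div_iff₀ (by positivity : (0:ℝ) < (n:ℝ)+1), div_eq_mul_inv] at h1
      exact h1
    apply h
    refine ⟨η, hη1, fun g => ?_⟩
    obtain ⟨m, hm⟩ := hf g
    have hbound : ∀ n ≥ m, ‖π g (η n) - η n‖ ≤ ((n : ℝ) + 1)⁻¹ := by
      intro n hn
      have hgmem : g ∈ (Finset.range (n+1)).image f := by
        refine Finset.mem_image.mpr ⟨m, Finset.mem_range.mpr (Nat.lt_succ_of_le hn), hm⟩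
      have := Finset.single_le_sum (f := fun g => ‖π g (η n) - η n‖)
        (fun i _ => norm_nonneg _) hgmem
      exact this.trans (hηsum n).le
    have hinv : Tendsto (fun n : ℕ => ((n : ℝ) + 1)⁻¹) atTop (nhds 0) :=
      tendsto_one_div_add_atTop_nhds_zero_nat.congr (fun n => by rw [one_div])
    apply tendsto_of_tendsto_of_tendsto_of_le_of_le' tendsto_const_nhds hinv
    · filter_upwards with n using norm_nonneg _
    · filter_upwards [eventually_ge_atTop m] with n hn using hbound n hn
end

section
/- Let Γ be a countable group acting on a countable set J, let H be a Hilbert space with an orthogonal decomposition H = ⊕_{F ∈ J} K_F into closed subspaces, and let ρ: Γ → U(H) be a unitary representation with ρ(g)(K_F) = K_{g·F} for all g ∈ Γ and F ∈ J. If ρ weakly contains the trivial representation (i.e. there is a sequence of unit vectors ξ_n with ‖ρ(g)ξ_n − ξ_n‖ → 0 for all g ∈ Γ), then there exists a Γ-invariant mean on J. -/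
/-!
For `A ⊆ J` let `P_A` be the orthogonal projection onto the closed span of the `K_F`, `F ∈ A`.
Orthogonality of the decomposition makes `A ↦ ‖P_A ξ‖²` a finitely additive probability on `J`
for every unit vector `ξ`, and equivariance gives `P_{g•A} (ρ g ξ) = ρ g (P_A ξ)`, so
`|‖P_{g•A} ξ‖² - ‖P_A ξ‖²| ≤ 2 ‖ρ g ξ - ξ‖`. Along almost invariant unit vectors `ξ_n` these
means are asymptotically invariant, and any ultrafilter limit of them is an invariant mean.
-/

open Filter Topology Submodule
open scoped InnerProductSpace

theorem exists_invariant_mean_of_tendsto {ι Γ J : Type*} [SMul Γ J]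
    (l : Filter ι) [l.NeBot] (μ : ι → Set J → ℝ)
    (h_nonneg : ∀ i A, 0 ≤ μ i A) (h_univ : ∀ i, μ i Set.univ = 1)
    (h_add : ∀ i A B, Disjoint A B → μ i (A ∪ B) = μ i A + μ i B)
    (h_inv : ∀ (g : Γ) A, Tendsto (fun i => μ i ((fun F => g • F) '' A) - μ i A) l (𝓝 0)) :
    ∃ m : Set J → ℝ, (∀ A, 0 ≤ m A) ∧ m Set.univ = 1 ∧
      (∀ A B, Disjoint A B → m (A ∪ B) = m A + m B) ∧
      ∀ (g : Γ) A, m ((fun F => g • F) '' A) = m A := by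
  have h_le_one (i : ι) (A : Set J) : μ i A ≤ 1 := by
    have := h_add i A Aᶜ disjoint_compl_right
    rw [Set.union_compl_self, h_univ] at this
    linarith [h_nonneg i Aᶜ]
  -- Tychonoff: the approximate means lie in the compact cube `[0, 1] ^ Set J`.
  obtain ⟨m, hm_mem, hm⟩ := (isCompact_univ_pi fun _ => isCompact_Icc).ultrafilter_le_nhds
    (Ultrafilter.map μ (Ultrafilter.of l))
    (le_principal_iff.2 <| Ultrafilter.mem_map.2 <|
      univ_mem' fun i A _ => ⟨h_nonneg i A, h_le_one i A⟩)
  have hm_lim (A : Set J) : Tendsto (μ · A) (Ultrafilter.of l) (𝓝 (m A)) :=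
    tendsto_pi_nhds.1 hm A
  refine ⟨m, fun A => (hm_mem A trivial).1, ?_, fun A B hAB => ?_, fun g A => ?_⟩
  · exact tendsto_nhds_unique (hm_lim _) (by simp only [h_univ, tendsto_const_nhds])
  · exact tendsto_nhds_unique (hm_lim _)
      (((hm_lim A).add (hm_lim B)).congr fun i => (h_add i A B hAB).symm)
  · refine tendsto_nhds_unique (hm_lim _) ?_
    simpa using (hm_lim A).add ((h_inv g A).mono_left (Ultrafilter.of_le l))

section ClosedSpan

variable {𝕜 E : Type*} [RCLike 𝕜] [NormedAddCommGroup E] [InnerProductSpace 𝕜 E]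

theorem Submodule.IsOrtho.topologicalClosure {U V : Submodule 𝕜 E} (h : U ⟂ V) :
    U.topologicalClosure ⟂ V.topologicalClosure := by
  rw [isOrtho_iff_le, orthogonal_closure]
  exact U.topologicalClosure_minimal h.le V.isClosed_orthogonal

theorem LinearIsometryEquiv.map_topologicalClosure (U : E ≃ₗᵢ[𝕜] E) (p : Submodule 𝕜 E) :
    p.topologicalClosure.map (U.toLinearEquiv : E →ₗ[𝕜] E) =
      (p.map (U.toLinearEquiv : E →ₗ[𝕜] E)).topologicalClosure :=
  SetLike.coe_injective <| U.toHomeomorph.image_closure p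

theorem abs_norm_sq_starProjection_sub_le (K : Submodule 𝕜 E) [K.HasOrthogonalProjection]
    (x y : E) :
    |‖K.starProjection x‖ ^ 2 - ‖K.starProjection y‖ ^ 2| ≤ (‖x‖ + ‖y‖) * ‖x - y‖ := by
  have h_diff : |‖K.starProjection x‖ - ‖K.starProjection y‖| ≤ ‖x - y‖ :=
    (abs_norm_sub_norm_le _ _).trans <| by
      simpa only [map_sub] using K.norm_starProjection_apply_le (x - y)
  have h_sum : |‖K.starProjection x‖ + ‖K.starProjection y‖| ≤ ‖x‖ + ‖y‖ := by
    rw [abs_of_nonneg (by positivity)]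
    exact add_le_add (K.norm_starProjection_apply_le x) (K.norm_starProjection_apply_le y)
  rw [sq_sub_sq, abs_mul]
  exact mul_le_mul h_sum h_diff (abs_nonneg _) (by positivity)

variable {J : Type*} (K : J → Submodule 𝕜 E)

def closedSpan (A : Set J) : Submodule 𝕜 E :=
  (⨆ F ∈ A, K F).topologicalClosure

instance [CompleteSpace E] (A : Set J) : CompleteSpace (closedSpan K A) :=
  (isClosed_topologicalClosure _).completeSpace_coe

theorem closedSpan_mono : Monotone (closedSpan K) := fun _ _ hAB =>
  topologicalClosure_mono <| biSup_mono fun _ hF => hAB hF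

theorem closedSpan_univ (hK : Dense ((⨆ F, K F : Submodule 𝕜 E) : Set E)) :
    closedSpan K Set.univ = ⊤ := by
  simpa [closedSpan] using dense_iff_topologicalClosure_eq_top.1 hK

theorem orthogonal_closedSpan_union (A B : Set J) :
    (closedSpan K (A ∪ B))ᗮ = (closedSpan K A)ᗮ ⊓ (closedSpan K B)ᗮ := by
  simp only [closedSpan, orthogonal_closure, iSup_union, inf_orthogonal]

variable {K}

theorem isOrtho_closedSpan (hK : Pairwise fun F F' => K F ⟂ K F') {A B : Set J}
    (hAB : Disjoint A B) : closedSpan K A ⟂ closedSpan K B := by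
  refine IsOrtho.topologicalClosure ?_
  simp only [isOrtho_iSup_left, isOrtho_iSup_right]
  exact fun F hF F' hF' => hK (hAB.ne_of_mem hF' hF)

theorem starProjection_closedSpan_union [CompleteSpace E] (hK : Pairwise fun F F' => K F ⟂ K F')
    {A B : Set J} (hAB : Disjoint A B) (x : E) :
    (closedSpan K (A ∪ B)).starProjection x =
      (closedSpan K A).starProjection x + (closedSpan K B).starProjection x := by
  have hA := (closedSpan K A).starProjection_apply_mem x
  have hB := (closedSpan K B).starProjection_apply_mem x
  refine eq_starProjection_of_mem_orthogonal ?_ ?_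
  · exact add_mem (closedSpan_mono K Set.subset_union_left hA)
      (closedSpan_mono K Set.subset_union_right hB)
  · rw [orthogonal_closedSpan_union]
    refine ⟨?_, ?_⟩
    · rw [← sub_sub]
      exact sub_mem ((closedSpan K A).sub_starProjection_mem_orthogonal x)
        ((isOrtho_closedSpan hK hAB).ge hB)
    · rw [sub_add_eq_sub_sub_swap]
      exact sub_mem ((closedSpan K B).sub_starProjection_mem_orthogonal x)
        ((isOrtho_closedSpan hK hAB.symm).ge hA)

theorem norm_sq_starProjection_closedSpan_union [CompleteSpace E]
    (hK : Pairwise fun F F' => K F ⟂ K F') {A B : Set J} (hAB : Disjoint A B) (x : E) :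
    ‖(closedSpan K (A ∪ B)).starProjection x‖ ^ 2 =
      ‖(closedSpan K A).starProjection x‖ ^ 2 + ‖(closedSpan K B).starProjection x‖ ^ 2 := by
  rw [starProjection_closedSpan_union hK hAB, sq, sq, sq,
    norm_add_sq_eq_norm_sq_add_norm_sq_of_inner_eq_zero (𝕜 := 𝕜)]
  exact (isOrtho_closedSpan hK hAB).inner_eq (starProjection_apply_mem _ x)
    (starProjection_apply_mem _ x)

theorem map_closedSpan (U : E ≃ₗᵢ[𝕜] E) {σ : J → J}
    (hU : ∀ F, (K F).map (U.toLinearEquiv : E →ₗ[𝕜] E) = K (σ F)) (A : Set J) :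
    (closedSpan K A).map (U.toLinearEquiv : E →ₗ[𝕜] E) = closedSpan K (σ '' A) := by
  simp only [closedSpan, U.map_topologicalClosure, Submodule.map_iSup, hU, iSup_image]

theorem starProjection_closedSpan_image [CompleteSpace E] (U : E ≃ₗᵢ[𝕜] E) {σ : J → J}
    (hU : ∀ F, (K F).map (U.toLinearEquiv : E →ₗ[𝕜] E) = K (σ F)) (A : Set J) (x : E) :
    (closedSpan K (σ '' A)).starProjection (U x) = U ((closedSpan K A).starProjection x) := by
  simp_rw [← map_closedSpan U hU, starProjection_map_apply, U.symm_apply_apply]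

theorem abs_norm_sq_starProjection_closedSpan_image_sub_le [CompleteSpace E] (U : E ≃ₗᵢ[𝕜] E)
    {σ : J → J} (hU : ∀ F, (K F).map (U.toLinearEquiv : E →ₗ[𝕜] E) = K (σ F)) (A : Set J)
    (x : E) :
    |‖(closedSpan K (σ '' A)).starProjection x‖ ^ 2 - ‖(closedSpan K A).starProjection x‖ ^ 2| ≤
      2 * ‖x‖ * ‖U x - x‖ := by
  have := abs_norm_sq_starProjection_sub_le (closedSpan K (σ '' A)) x (U x)
  rwa [starProjection_closedSpan_image U hU, U.norm_map, U.norm_map, norm_sub_rev, ← two_mul]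
    at this

end ClosedSpan

theorem stmt5_general {Γ J H : Type*} [Group Γ] [MulAction Γ J]
    [NormedAddCommGroup H] [InnerProductSpace ℂ H] [CompleteSpace H]
    (K : J → Submodule ℂ H)
    (hK_orth : ∀ F F' : J, F ≠ F' → ∀ x ∈ K F, ∀ y ∈ K F', ⟪x, y⟫_ℂ = 0)
    (hK_dense : closure ((⨆ F : J, K F : Submodule ℂ H) : Set H) = Set.univ)
    (ρ : Γ →* (H ≃ₗᵢ[ℂ] H))
    (hequiv : ∀ (g : Γ) (F : J), (ρ g) '' (K F : Set H) = (K (g • F) : Set H))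
    (halm : ∃ ξ : ℕ → H, (∀ n, ‖ξ n‖ = 1) ∧
      ∀ g : Γ, Tendsto (fun n => ‖ρ g (ξ n) - ξ n‖) atTop (nhds 0)) :
    ∃ m : Set J → ℝ,
      (∀ A : Set J, 0 ≤ m A) ∧
      m Set.univ = 1 ∧
      (∀ A B : Set J, Disjoint A B → m (A ∪ B) = m A + m B) ∧
      (∀ (g : Γ) (A : Set J), m ((fun F => g • F) '' A) = m A) := by
  obtain ⟨ξ, hξ_norm, hξ_inv⟩ := halm
  have hK : Pairwise fun F F' => K F ⟂ K F' := fun F F' h =>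
    isOrtho_iff_inner_eq.2 (hK_orth F F' h)
  have hρK (g : Γ) (F : J) : (K F).map ((ρ g).toLinearEquiv : H →ₗ[ℂ] H) = K (g • F) :=
    SetLike.coe_injective (hequiv g F)
  refine exists_invariant_mean_of_tendsto atTop
    (fun n A => ‖(closedSpan K A).starProjection (ξ n)‖ ^ 2) (fun _ _ => by positivity)
    (fun n => ?_) (fun n A B hAB => norm_sq_starProjection_closedSpan_union hK hAB (ξ n))
    (fun g A => ?_)
  · have hξ_mem : ξ n ∈ closedSpan K Set.univ := by
      rw [closedSpan_univ K (dense_iff_closure_eq.2 hK_dense)]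
      exact mem_top
    rw [starProjection_eq_self_iff.2 hξ_mem, hξ_norm, one_pow]
  · refine squeeze_zero_norm (fun n => ?_) (by simpa using (hξ_inv g).const_mul 2)
    simpa [hξ_norm] using abs_norm_sq_starProjection_closedSpan_image_sub_le (ρ g) (hρK g) A (ξ n)

/-- Let `Γ` act on a countable set `J`, let `H = ⊕_{F ∈ J} K_F` be an orthogonal
decomposition into closed subspaces, and let `ρ` be a unitary representation with
`ρ(g) K_F = K_{g • F}`. If `ρ` weakly contains the trivial representation, then
there is a `Γ`-invariant mean on `J`. -/
theorem stmt5 {Γ J H : Type*} [Group Γ] [Countable Γ] [Countable J] [MulAction Γ J]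
    [NormedAddCommGroup H] [InnerProductSpace ℂ H] [CompleteSpace H]
    (K : J → Submodule ℂ H)
    (hK_closed : ∀ F : J, IsClosed (K F : Set H))
    (hK_orth : ∀ F F' : J, F ≠ F' → ∀ x ∈ K F, ∀ y ∈ K F', ⟪x, y⟫_ℂ = 0)
    (hK_dense : closure ((⨆ F : J, K F : Submodule ℂ H) : Set H) = Set.univ)
    (ρ : Γ →* (H ≃ₗᵢ[ℂ] H))
    (hequiv : ∀ (g : Γ) (F : J), (ρ g) '' (K F : Set H) = (K (g • F) : Set H))
    (halm : ∃ ξ : ℕ → H, (∀ n, ‖ξ n‖ = 1) ∧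
      ∀ g : Γ, Tendsto (fun n => ‖ρ g (ξ n) - ξ n‖) atTop (nhds 0)) :
    ∃ m : Set J → ℝ,
      (∀ A : Set J, 0 ≤ m A) ∧
      m Set.univ = 1 ∧
      (∀ A B : Set J, Disjoint A B → m (A ∪ B) = m A + m B) ∧
      (∀ (g : Γ) (A : Set J), m ((fun F => g • F) '' A) = m A) :=
  stmt5_general K hK_orth hK_dense ρ hequiv halm
end

section
/- Let Γ be a group acting on a set I, and let J denote the set of nonempty finite subsets of I, equipped with the induced Γ-action g · F = {g · k : k ∈ F}. If there exists a Γ-invariant mean on J, then there exists a Γ-invariant mean on I. -/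
/-!
A finitely additive probability `m` integrates `[0, 1]`-valued functions: approximate `f` from
below by `⌊n f⌋ / n`, whose integral is a finite sum of values of `m` on the layers `{k < ⌊n f⌋}`;
these approximations are additive up to `1 / n` and all lie within `1 / n` of their supremum.
Integrating the uniform probability on `F` against an invariant mean on the nonempty finite sets
`F` then gives a mean on `I`, invariant because the uniform probability on `g • F` is the
translate by `g` of the one on `F`.
-/

section NatFloor

variable {R : Type*} [CommRing R] [LinearOrder R] [IsStrictOrderedRing R] [FloorSemiring R]

theorem Nat.le_floor_add_of_nonneg {a b : R} (ha : 0 ≤ a) (hb : 0 ≤ b) :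
    ⌊a⌋₊ + ⌊b⌋₊ ≤ ⌊a + b⌋₊ := by
  rw [Nat.le_floor_iff (add_nonneg ha hb)]
  push_cast
  linarith [Nat.floor_le ha, Nat.floor_le hb]

theorem Nat.floor_add_le_floor_add_floor_add_one {a b : R} (ha : 0 ≤ a) (hb : 0 ≤ b) :
    ⌊a + b⌋₊ ≤ ⌊a⌋₊ + ⌊b⌋₊ + 1 := by
  have := (Nat.floor_lt (add_nonneg ha hb)).2 <| show a + b < ↑(⌊a⌋₊ + ⌊b⌋₊ + 2) by
    push_cast
    linarith [Nat.lt_floor_add_one a, Nat.lt_floor_add_one b]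
  omega

theorem Nat.mul_floor_mul_le {a : R} (ha : 0 ≤ a) (n k : ℕ) :
    k * ⌊n * a⌋₊ ≤ n * ⌊k * a⌋₊ + n := by
  have hle : (k : R) * ⌊n * a⌋₊ ≤ n * ⌊k * a⌋₊ + n := calc
    (k : R) * ⌊n * a⌋₊ ≤ k * (n * a) := by gcongr; exact Nat.floor_le (by positivity)
    _ = n * (k * a) := by ring
    _ ≤ n * (⌊k * a⌋₊ + 1) := by gcongr; exact (Nat.lt_floor_add_one _).le
    _ = n * ⌊k * a⌋₊ + n := by ring
  exact_mod_cast hle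

theorem Nat.floor_mul_le_of_le_one (n : ℕ) {a : R} (ha : a ≤ 1) : ⌊n * a⌋₊ ≤ n :=
  Nat.floor_le_of_le (mul_le_of_le_one_right n.cast_nonneg ha)

end NatFloor

open Finset

section Mean

structure IsMean {X : Type*} (m : Set X → ℝ) : Prop where
  nonneg : ∀ A, 0 ≤ m A
  univ : m Set.univ = 1
  add : ∀ A B, Disjoint A B → m (A ∪ B) = m A + m B

variable {X Y : Type*} {m : Set X → ℝ}

namespace IsMean

variable (hm : IsMean m)
include hm

theorem mono {A B : Set X} (h : A ⊆ B) : m A ≤ m B := by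
  have := hm.add A (B \ A) disjoint_sdiff_self_right
  rw [Set.union_sdiff_cancel h] at this
  linarith [hm.nonneg (B \ A)]

theorem le_one (A : Set X) : m A ≤ 1 :=
  hm.univ ▸ hm.mono (Set.subset_univ A)

end IsMean

/-- The integral of `min φ N` against `m`. -/
def layerSum (m : Set X → ℝ) (N : ℕ) (φ : X → ℕ) : ℝ :=
  ∑ k ∈ range N, m {x | k < φ x}

section Additive

variable (hadd : ∀ A B, Disjoint A B → m (A ∪ B) = m A + m B)
include hadd

theorem map_empty_of_additive : m ∅ = 0 := by
  simpa using hadd ∅ ∅ disjoint_bot_left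

theorem map_biUnion_of_additive {ι : Type*} (s : Finset ι) {A : ι → Set X}
    (hA : (s : Set ι).PairwiseDisjoint A) : m (⋃ i ∈ s, A i) = ∑ i ∈ s, m (A i) := by
  classical
  induction s using Finset.induction_on with
  | empty => simp [map_empty_of_additive hadd]
  | insert a s ha ih =>
    rw [coe_insert, Set.pairwiseDisjoint_insert] at hA
    rw [set_biUnion_insert, sum_insert ha, hadd, ih hA.1]
    exact Set.disjoint_iUnion₂_right.2 fun j hj => hA.2 j hj (ne_of_mem_of_not_mem hj ha).symm

theorem layerSum_of_le {φ : X → ℕ} {N M : ℕ} (hφ : ∀ x, φ x ≤ N) (hNM : N ≤ M) :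
    layerSum m M φ = layerSum m N φ := by
  induction M, hNM using Nat.le_induction with
  | base => rfl
  | succ M hNM ih =>
    have hempty : {x | M < φ x} = ∅ := by
      ext x
      simpa using (hφ x).trans hNM
    rw [layerSum, sum_range_succ, ← layerSum, ih, hempty, map_empty_of_additive hadd, add_zero]

theorem layerSum_add_indicator {φ : X → ℕ} {N : ℕ} (hφ : ∀ x, φ x ≤ N) (B : Set X) :
    layerSum m (N + 1) (fun x => φ x + B.indicator 1 x) = layerSum m N φ + m B := by
  -- raising `φ` by one on `B` adds the slice `B ∩ {φ = k}` to the `k`-th layer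
  have hlayer : ∀ k, {x | k < φ x + B.indicator 1 x} = {x | k < φ x} ∪ (B ∩ {x | φ x = k}) := by
    intro k
    ext x
    by_cases hx : x ∈ B <;> simp [hx]; omega
  have hdisj : ∀ k, Disjoint {x | k < φ x} (B ∩ {x | φ x = k}) := fun k =>
    Set.disjoint_left.2 fun x hlt hx => hlt.ne' hx.2
  have hslices : B = ⋃ k ∈ range (N + 1), B ∩ {x | φ x = k} := by
    ext x
    simpa [Nat.lt_succ_iff] using fun _ => hφ x
  have hslices_disj : ((range (N + 1) : Finset ℕ) : Set ℕ).PairwiseDisjoint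
      fun k => B ∩ {x | φ x = k} := fun k _ l _ hkl =>
    Set.disjoint_left.2 fun x hk hl => hkl (hk.2.symm.trans hl.2)
  calc layerSum m (N + 1) (fun x => φ x + B.indicator 1 x)
      = layerSum m (N + 1) φ + ∑ k ∈ range (N + 1), m (B ∩ {x | φ x = k}) := by
        simp only [layerSum, hlayer, hadd _ _ (hdisj _), sum_add_distrib]
    _ = layerSum m N φ + m B := by
        rw [layerSum_of_le hadd hφ N.le_succ, ← map_biUnion_of_additive hadd _ hslices_disj,
          ← hslices]

theorem layerSum_add {φ ψ : X → ℕ} {N M : ℕ} (hφ : ∀ x, φ x ≤ N) (hψ : ∀ x, ψ x ≤ M) :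
    layerSum m (N + M) (fun x => φ x + ψ x) = layerSum m N φ + layerSum m M ψ := by
  induction M generalizing ψ with
  | zero =>
    have hψ0 : ∀ x, ψ x = 0 := fun x => Nat.le_zero.1 (hψ x)
    simp [hψ0, layerSum]
  | succ M ih =>
    have hψ' : ∀ x, ψ x - 1 ≤ M := fun x => by have := hψ x; omega
    have hpeel : ∀ x, ψ x - 1 + {x | 0 < ψ x}.indicator 1 x = ψ x := fun x => by
      by_cases hx : 0 < ψ x <;> simp [hx] <;> omega
    have h0 := layerSum_add_indicator hadd hψ' {x | 0 < ψ x}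
    have h1 := layerSum_add_indicator hadd (fun x => Nat.add_le_add (hφ x) (hψ' x)) {x | 0 < ψ x}
    simp only [add_assoc, hpeel] at h0 h1
    rw [h1, ih hψ', add_assoc, ← h0]

theorem layerSum_mul {φ : X → ℕ} {N : ℕ} (hφ : ∀ x, φ x ≤ N) (k : ℕ) :
    layerSum m (k * N) (fun x => k * φ x) = k * layerSum m N φ := by
  induction k with
  | zero => simp [layerSum]
  | succ k ih =>
    simp only [add_mul, one_mul, Nat.cast_add, Nat.cast_one]
    rw [layerSum_add hadd (fun x => Nat.mul_le_mul_left k (hφ x)) hφ, ih]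

end Additive

theorem layerSum_nonneg (hnonneg : ∀ A, 0 ≤ m A) (N : ℕ) (φ : X → ℕ) : 0 ≤ layerSum m N φ :=
  sum_nonneg fun _ _ => hnonneg _

theorem layerSum_const_self (huniv : m Set.univ = 1) (N : ℕ) :
    layerSum m N (fun _ => N) = N := by
  have hlayer : ∀ k ∈ range N, m {_x : X | k < N} = 1 := fun k hk => by
    simpa [mem_range.1 hk] using huniv
  simp [layerSum, sum_congr rfl hlayer]

theorem layerSum_comp {μ : Set Y → ℝ} {σ : Y → X} (hσ : ∀ S, μ (σ ⁻¹' S) = m S) (N : ℕ)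
    (φ : X → ℕ) : layerSum μ N (φ ∘ σ) = layerSum m N φ :=
  sum_congr rfl fun k _ => hσ {x | k < φ x}

namespace IsMean

variable (hm : IsMean m)
include hm

theorem layerSum_mono {φ ψ : X → ℕ} (h : ∀ x, φ x ≤ ψ x) (N : ℕ) :
    layerSum m N φ ≤ layerSum m N ψ :=
  sum_le_sum fun _ _ => hm.mono fun x hx => lt_of_lt_of_le hx (h x)

theorem layerSum_le (N : ℕ) (φ : X → ℕ) : layerSum m N φ ≤ N :=
  (sum_le_sum fun _ _ => hm.le_one _).trans (by simp)

end IsMean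

/-- For `0 ≤ f ≤ 1` this is the integral of `⌊n f⌋ / n` against `m`. -/
noncomputable def approxIntegral (m : Set X → ℝ) (n : ℕ) (f : X → ℝ) : ℝ :=
  layerSum m n (fun x => ⌊n * f x⌋₊) / n

theorem approxIntegral_nonneg (hnonneg : ∀ A, 0 ≤ m A) (n : ℕ) (f : X → ℝ) :
    0 ≤ approxIntegral m n f :=
  div_nonneg (layerSum_nonneg hnonneg _ _) n.cast_nonneg

theorem approxIntegral_comp {μ : Set Y → ℝ} {σ : Y → X} (hσ : ∀ S, μ (σ ⁻¹' S) = m S) (n : ℕ)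
    (f : X → ℝ) : approxIntegral μ n (f ∘ σ) = approxIntegral m n f := by
  rw [approxIntegral, approxIntegral, ← layerSum_comp hσ]
  rfl

namespace IsMean

variable (hm : IsMean m)
include hm

theorem approxIntegral_le_one (n : ℕ) (f : X → ℝ) : approxIntegral m n f ≤ 1 :=
  div_le_one_of_le₀ (hm.layerSum_le _ _) n.cast_nonneg

theorem approxIntegral_one {n : ℕ} (hn : 0 < n) : approxIntegral m n (fun _ => 1) = 1 := by
  simp only [approxIntegral, mul_one, Nat.floor_natCast, layerSum_const_self hm.univ]
  exact div_self (Nat.cast_ne_zero.2 hn.ne')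

theorem approxIntegral_le_approxIntegral_add_one_div {f : X → ℝ} (hf : ∀ x, f x ∈ Set.Icc 0 1)
    {n k : ℕ} (hn : 0 < n) (hk : 0 < k) : approxIntegral m n f ≤ approxIntegral m k f + 1 / k := by
  set φ : X → ℕ := fun x => ⌊n * f x⌋₊
  set ψ : X → ℕ := fun x => ⌊k * f x⌋₊
  have hφ : ∀ x, φ x ≤ n := fun x => Nat.floor_mul_le_of_le_one n (hf x).2
  have hψ : ∀ x, ψ x ≤ k := fun x => Nat.floor_mul_le_of_le_one k (hf x).2
  have key : k * layerSum m n φ ≤ n * layerSum m k ψ + n := calc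
    k * layerSum m n φ = layerSum m (k * n) (fun x => k * φ x) := (layerSum_mul hm.add hφ k).symm
    _ = layerSum m (n * k + n) (fun x => k * φ x) :=
        (layerSum_of_le hm.add (fun x => Nat.mul_le_mul_left k (hφ x))
          (by rw [mul_comm]; exact Nat.le_add_right _ _)).symm
    _ ≤ layerSum m (n * k + n) (fun x => n * ψ x + n) :=
        hm.layerSum_mono (fun x => Nat.mul_floor_mul_le (hf x).1 n k) _
    _ = n * layerSum m k ψ + n := by
        rw [layerSum_add hm.add (fun x => Nat.mul_le_mul_left n (hψ x)) (fun _ => le_rfl),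
          layerSum_mul hm.add hψ, layerSum_const_self hm.univ]
  have hn' : (0 : ℝ) < n := Nat.cast_pos.2 hn
  have hk' : (0 : ℝ) < k := Nat.cast_pos.2 hk
  calc approxIntegral m n f = k * layerSum m n φ / (n * k) := by
        rw [approxIntegral, mul_comm (n : ℝ), ← div_div, mul_div_cancel_left₀ _ hk'.ne']
    _ ≤ (n * layerSum m k ψ + n) / (n * k) := by gcongr
    _ = approxIntegral m k f + 1 / k := by
        rw [approxIntegral]
        field_simp
        rfl

theorem approxIntegral_add_approxIntegral_le {f g : X → ℝ} (hf : ∀ x, 0 ≤ f x) (hg : ∀ x, 0 ≤ g x)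
    (hfg : ∀ x, f x + g x ≤ 1) (n : ℕ) :
    approxIntegral m n f + approxIntegral m n g ≤ approxIntegral m n (fun x => f x + g x) := by
  have hφ : ∀ x, ⌊n * f x⌋₊ ≤ n := fun x => Nat.floor_mul_le_of_le_one n (by linarith [hg x, hfg x])
  have hψ : ∀ x, ⌊n * g x⌋₊ ≤ n := fun x => Nat.floor_mul_le_of_le_one n (by linarith [hf x, hfg x])
  have hχ : ∀ x, ⌊n * (f x + g x)⌋₊ ≤ n := fun x => Nat.floor_mul_le_of_le_one n (hfg x)
  have hsum : layerSum m n (fun x => ⌊n * f x⌋₊) + layerSum m n (fun x => ⌊n * g x⌋₊)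
      ≤ layerSum m n (fun x => ⌊n * (f x + g x)⌋₊) := by
    rw [← layerSum_add hm.add hφ hψ, ← layerSum_of_le hm.add hχ (Nat.le_add_right n n)]
    refine hm.layerSum_mono (fun x => ?_) _
    rw [mul_add]
    exact Nat.le_floor_add_of_nonneg (by have := hf x; positivity) (by have := hg x; positivity)
  simp only [approxIntegral, ← add_div]
  gcongr

theorem approxIntegral_add_le {f g : X → ℝ} (hf : ∀ x, 0 ≤ f x) (hg : ∀ x, 0 ≤ g x)
    (hfg : ∀ x, f x + g x ≤ 1) (n : ℕ) :
    approxIntegral m n (fun x => f x + g x)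
      ≤ approxIntegral m n f + approxIntegral m n g + 1 / n := by
  have hφ : ∀ x, ⌊n * f x⌋₊ ≤ n := fun x => Nat.floor_mul_le_of_le_one n (by linarith [hg x, hfg x])
  have hψ : ∀ x, ⌊n * g x⌋₊ ≤ n := fun x => Nat.floor_mul_le_of_le_one n (by linarith [hf x, hfg x])
  have hχ : ∀ x, ⌊n * (f x + g x)⌋₊ ≤ n := fun x => Nat.floor_mul_le_of_le_one n (hfg x)
  have hsum : layerSum m n (fun x => ⌊n * (f x + g x)⌋₊)
      ≤ layerSum m n (fun x => ⌊n * f x⌋₊) + layerSum m n (fun x => ⌊n * g x⌋₊) + 1 := by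
    rw [← layerSum_of_le hm.add hχ (by omega : n ≤ n + n + 1)]
    calc layerSum m (n + n + 1) (fun x => ⌊n * (f x + g x)⌋₊)
        ≤ layerSum m (n + n + 1) (fun x => ⌊n * f x⌋₊ + ⌊n * g x⌋₊ + 1) := by
          refine hm.layerSum_mono (fun x => ?_) _
          rw [mul_add]
          exact Nat.floor_add_le_floor_add_floor_add_one (by have := hf x; positivity)
            (by have := hg x; positivity)
      _ = _ := by
          rw [layerSum_add hm.add (fun x => Nat.add_le_add (hφ x) (hψ x)) (fun _ => le_rfl),
            layerSum_add hm.add hφ hψ, layerSum_const_self hm.univ, Nat.cast_one]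
  simp only [approxIntegral, ← add_div]
  gcongr

end IsMean

/-- The integral of a `[0, 1]`-valued `f` against `m`; each `approxIntegral m n f` is within `1 / n`
of it. -/
noncomputable def meanIntegral (m : Set X → ℝ) (f : X → ℝ) : ℝ :=
  ⨆ n : ℕ, approxIntegral m (n + 1) f

theorem meanIntegral_comp {μ : Set Y → ℝ} {σ : Y → X} (hσ : ∀ S, μ (σ ⁻¹' S) = m S)
    (f : X → ℝ) : meanIntegral μ (f ∘ σ) = meanIntegral m f := by
  simp only [meanIntegral, approxIntegral_comp hσ]

namespace IsMean

variable (hm : IsMean m)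
include hm

theorem approxIntegral_le_meanIntegral (f : X → ℝ) (n : ℕ) :
    approxIntegral m (n + 1) f ≤ meanIntegral m f :=
  le_ciSup (f := fun n : ℕ => approxIntegral m (n + 1) f)
    ⟨1, Set.forall_mem_range.2 fun _ => hm.approxIntegral_le_one _ f⟩ n

theorem meanIntegral_le_approxIntegral_add_one_div {f : X → ℝ} (hf : ∀ x, f x ∈ Set.Icc 0 1)
    (k : ℕ) :
    meanIntegral m f ≤ approxIntegral m (k + 1) f + 1 / (k + 1) := by
  refine ciSup_le fun n => ?_
  exact_mod_cast hm.approxIntegral_le_approxIntegral_add_one_div hf n.succ_pos k.succ_pos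

theorem meanIntegral_nonneg (f : X → ℝ) : 0 ≤ meanIntegral m f :=
  (approxIntegral_nonneg hm.nonneg 1 f).trans (hm.approxIntegral_le_meanIntegral f 0)

theorem meanIntegral_one : meanIntegral m (fun _ => 1) = 1 := by
  simp only [meanIntegral, hm.approxIntegral_one (Nat.succ_pos _), ciSup_const]

theorem meanIntegral_add {f g : X → ℝ} (hf : ∀ x, 0 ≤ f x) (hg : ∀ x, 0 ≤ g x)
    (hfg : ∀ x, f x + g x ≤ 1) :
    meanIntegral m (fun x => f x + g x) = meanIntegral m f + meanIntegral m g := by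
  have hf' : ∀ x, f x ∈ Set.Icc 0 1 := fun x => ⟨hf x, by linarith [hg x, hfg x]⟩
  have hg' : ∀ x, g x ∈ Set.Icc 0 1 := fun x => ⟨hg x, by linarith [hf x, hfg x]⟩
  have hfg' : ∀ x, f x + g x ∈ Set.Icc 0 1 := fun x => ⟨add_nonneg (hf x) (hg x), hfg x⟩
  have hlim : ∀ {a b : ℝ}, (∀ k : ℕ, a ≤ b + 1 / (k + 1) + 1 / (k + 1)) → a ≤ b := fun {a b} h => by
    have := (tendsto_const_nhds (x := b)).add tendsto_one_div_add_atTop_nhds_zero_nat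
      |>.add (tendsto_one_div_add_atTop_nhds_zero_nat (𝕜 := ℝ))
    rw [add_zero, add_zero] at this
    exact ge_of_tendsto' this h
  apply le_antisymm <;> refine hlim fun k => ?_
  · have hupper := hm.approxIntegral_add_le hf hg hfg (k + 1)
    rw [Nat.cast_succ] at hupper
    linarith [hm.meanIntegral_le_approxIntegral_add_one_div hfg' k,
      hm.approxIntegral_le_meanIntegral f k, hm.approxIntegral_le_meanIntegral g k]
  · linarith [hm.meanIntegral_le_approxIntegral_add_one_div hf' k,
      hm.meanIntegral_le_approxIntegral_add_one_div hg' k,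
      hm.approxIntegral_add_approxIntegral_le hf hg hfg (k + 1),
      hm.approxIntegral_le_meanIntegral (fun x => f x + g x) k]

end IsMean

theorem IsMean.isMean_meanIntegral {I : Type*} (hm : IsMean m) {w : Set I → X → ℝ}
    (hw : ∀ x, IsMean fun A => w A x) : IsMean fun A => meanIntegral m (w A) where
  nonneg _ := hm.meanIntegral_nonneg _
  univ := by
    rw [show w Set.univ = fun _ => 1 from funext fun x => (hw x).univ]
    exact hm.meanIntegral_one
  add A B hAB := by
    rw [show w (A ∪ B) = fun x => w A x + w B x from funext fun x => (hw x).add A B hAB]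
    exact hm.meanIntegral_add (fun x => (hw x).nonneg A) (fun x => (hw x).nonneg B)
      fun x => (hw x).add A B hAB ▸ (hw x).le_one (A ∪ B)

section UniformMean

variable {I : Type*}

noncomputable def uniformMean (F : Finset I) (A : Set I) : ℝ :=
  (∑ k ∈ F, A.indicator 1 k) / #F

theorem isMean_uniformMean {F : Finset I} (hF : F.Nonempty) : IsMean (uniformMean F) where
  nonneg A := div_nonneg (sum_nonneg fun k _ => Set.indicator_nonneg (fun _ _ => zero_le_one) k)
    (Nat.cast_nonneg _)
  univ := by simp [uniformMean, hF.card_pos.ne']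
  add A B hAB := by
    rw [uniformMean, Set.indicator_union_of_disjoint hAB, sum_add_distrib, add_div]
    rfl

theorem uniformMean_image_smul {Γ : Type*} [Group Γ] [MulAction Γ I] [DecidableEq I] (g : Γ)
    (F : Finset I) (A : Set I) :
    uniformMean F ((g • ·) '' A) = uniformMean (F.image (g⁻¹ • ·)) A := by
  have hind : ∀ k, ((g • ·) '' A).indicator (1 : I → ℝ) k = A.indicator 1 (g⁻¹ • k) := fun k => by
    conv_lhs => rw [← smul_inv_smul g k]
    exact Set.indicator_image (MulAction.injective g)
  simp only [uniformMean, hind, sum_image fun x _ y _ h => MulAction.injective g⁻¹ h,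
    card_image_of_injective _ (MulAction.injective g⁻¹)]

end UniformMean

end Mean

/-- If the action of `Γ` on the set `J` of nonempty finite subsets of `I` (with the induced
action) admits an invariant mean, then so does the action of `Γ` on `I`. -/
theorem stmt10 {Γ I : Type*} [Group Γ] [MulAction Γ I] [DecidableEq I]
    (m : Set {F : Finset I // F.Nonempty} → ℝ)
    (hm_nonneg : ∀ A, 0 ≤ m A)
    (hm_univ : m Set.univ = 1)
    (hm_add : ∀ A B, Disjoint A B → m (A ∪ B) = m A + m B)
    (hm_inv : ∀ (g : Γ) (A : Set {F : Finset I // F.Nonempty}),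
      m ((fun F : {F : Finset I // F.Nonempty} =>
        (⟨F.1.image (fun x => g • x), F.2.image _⟩ : {F : Finset I // F.Nonempty})) '' A) = m A) :
    ∃ n : Set I → ℝ,
      (∀ A : Set I, 0 ≤ n A) ∧
      n Set.univ = 1 ∧
      (∀ A B : Set I, Disjoint A B → n (A ∪ B) = n A + n B) ∧
      (∀ (g : Γ) (A : Set I), n ((fun x => g • x) '' A) = n A) := by
  have hm : IsMean m := ⟨hm_nonneg, hm_univ, hm_add⟩
  have hmix := hm.isMean_meanIntegral (w := fun A F => uniformMean F.1 A)
    fun F => isMean_uniformMean F.2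
  refine ⟨_, hmix.nonneg, hmix.univ, hmix.add, fun g A => ?_⟩
  let σ (h : Γ) (F : {F : Finset I // F.Nonempty}) : {F : Finset I // F.Nonempty} :=
    ⟨F.1.image (h • ·), F.2.image _⟩
  have hσ : ∀ S, m (σ g⁻¹ ⁻¹' S) = m S := fun S => by
    rw [← Set.image_eq_preimage_of_inverse (f := σ g)
      (fun F => Subtype.ext (by simp [σ, Finset.image_image, Function.comp_def]))
      (fun F => Subtype.ext (by simp [σ, Finset.image_image, Function.comp_def]))]
    exact hm_inv g S
  simp only [uniformMean_image_smul]
  exact meanIntegral_comp hσ (fun F => uniformMean F.1 A)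
end
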